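/- arXiv:1705.06797 — 4 statements merged into one kernel-verified Lean document; each statement's English description precedes it below -/
import Mathlib

section
/- Let Y be a Banach space containing a normalized sequence (y_n) such that for all k ≥ 1, all k ≤ n_1 < ... < n_k and all scalars (a_i), (1/(1+ν)) max|a_i| ≤ ‖Σ a_i y_{n_i}‖ ≤ (1+ν) max|a_i|. Then for every k ∈ ℕ there is a map f_k from the countably branching tree T_k^ω = ([ℕ]^{≤k}, d_T) of height k into Y with (1/(2(1+ν))) d_T(x,y) ≤ ‖f_k(x) − f_k(y)‖ ≤ d_T(x,y) for all vertices x, y; in particular the trees (T_k^ω)_{k≥1} equi-bi-Lipschitzly embed into Y. -/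
/-- Length of the longest common prefix of two lists. -/
def lcp : List ℕ → List ℕ → ℕ
  | a :: s, b :: t => if a = b then lcp s t + 1 else 0
  | _, _ => 0

/-- The tree distance `d_T(m,n) = |m| + |n| - 2|m ∧ n|` on finite subsets of `ℕ`. -/
def dT (m n : Finset ℕ) : ℕ :=
  m.card + n.card - 2 * lcp (m.sort (· ≤ ·)) (n.sort (· ≤ ·))

/-!
Regrouping the double sum gives `f(p) = ∑_{s ⪯ p} (|p| - |s| + 1) Z_s`. If `|q| ≤ |p|` and the
common prefix has length `l`, the coefficients of `f(p) - f(q)` are bounded by `a = |p| - l`, the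
bound is attained at the child `s₀` of the branching point on the branch of `p`, and
`a ≤ d_T(p, q) ≤ 2a`. So if all combinations of at most `B` vectors `Z_s` with coefficients in
`[-1, 1]` have norm at most `C` while `c ≤ ‖Z_s‖`, then `a (2c - C) ≤ ‖f(p) - f(q)‖ ≤ a C`, the
lower bound by comparison with `2a Z_{s₀}`. Taking `Z_s = y_{Φ(s)}` (`c = 1`, `C = 1 + ν`) loses
too much; instead the `Z_s` are disjointly supported blocks of `(y_n)` at a length where the
asymptotic suprema of block norms have stabilized, which makes `C / c` as close to `1` as needed.
-/

theorem lcp_comm : ∀ p q : List ℕ, lcp p q = lcp q p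
  | a :: p, b :: q => by
    by_cases h : a = b
    · simp [lcp, h, lcp_comm p q]
    · simp [lcp, h, Ne.symm h]
  | [], q => by cases q <;> rfl
  | _ :: _, [] => rfl

theorem lcp_le_length_left : ∀ p q : List ℕ, lcp p q ≤ p.length
  | a :: p, b :: q => by
    have := lcp_le_length_left p q
    simp only [lcp]; split_ifs <;> simp [this]
  | [], _ => by simp [lcp]
  | _ :: _, [] => by simp [lcp]

theorem lcp_le_length_right (p q : List ℕ) : lcp p q ≤ q.length :=
  lcp_comm p q ▸ lcp_le_length_left q p

theorem isPrefix_iff_length_le_lcp : ∀ {s p : List ℕ} (q : List ℕ), s <+: p →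
    (s <+: q ↔ s.length ≤ lcp p q)
  | [], _, _, _ => by simp
  | _ :: _, [], _, h => absurd h.length_le (by simp)
  | _ :: _, _ :: _, [], _ => by simp [lcp]
  | a :: s, b :: p, c :: q, h => by
    obtain ⟨rfl, hs⟩ := List.cons_prefix_cons.mp h
    by_cases hac : a = c
    · simp [lcp, hac, isPrefix_iff_length_le_lcp q hs]
    · simp [lcp, hac]

theorem lcp_self (p : List ℕ) : lcp p p = p.length :=
  le_antisymm (lcp_le_length_left p p)
    ((isPrefix_iff_length_le_lcp p (List.prefix_refl p)).mp (List.prefix_refl p))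

theorem lcp_lt_length {p q : List ℕ} (hqp : q.length ≤ p.length) (hne : p ≠ q) :
    lcp p q < p.length := by
  refine (lcp_le_length_left p q).lt_of_ne fun h => hne ?_
  have hpq : p <+: q := (isPrefix_iff_length_le_lcp q (List.prefix_refl p)).mpr h.ge
  exact hpq.eq_of_length (le_antisymm hpq.length_le hqp)

def treeDist (p q : List ℕ) : ℕ := p.length + q.length - 2 * lcp p q

theorem treeDist_comm (p q : List ℕ) : treeDist p q = treeDist q p := by
  rw [treeDist, treeDist, lcp_comm]; omega

theorem dT_eq_treeDist (u v : Finset ℕ) :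
    dT u v = treeDist (u.sort (· ≤ ·)) (v.sort (· ≤ ·)) := by
  simp [dT, treeDist]

theorem cast_treeDist (p q : List ℕ) :
    (treeDist p q : ℝ) = (p.length - lcp p q) + (q.length - lcp p q) := by
  have := lcp_le_length_left p q
  have := lcp_le_length_right p q
  rw [treeDist, Nat.cast_sub (by omega)]
  push_cast
  ring

/-- The number of vertices `u` with `s ⪯ u ⪯ p`. -/
def weight (p s : List ℕ) : ℝ := if s <+: p then p.length + 1 - s.length else 0

theorem abs_weight_sub_weight_le {p q : List ℕ} (hqp : q.length ≤ p.length) (s : List ℕ) :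
    |weight p s - weight q s| ≤ p.length - lcp p q := by
  have hlp := lcp_le_length_left p q
  have hlq := lcp_le_length_right p q
  unfold weight
  by_cases hsp : s <+: p <;> by_cases hsq : s <+: q
  · rw [if_pos hsp, if_pos hsq, abs_le]
    constructor <;> push_cast [← Nat.cast_le (α := ℝ)] at * <;> linarith
  · have hls : lcp p q + 1 ≤ s.length := not_le.mp ((isPrefix_iff_length_le_lcp q hsp).not.mp hsq)
    have hsp' := hsp.length_le
    rw [if_pos hsp, if_neg hsq, abs_le]
    constructor <;> push_cast [← Nat.cast_le (α := ℝ)] at * <;> linarith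
  · have hls : lcp p q + 1 ≤ s.length := by
      rw [lcp_comm]; exact not_le.mp ((isPrefix_iff_length_le_lcp p hsq).not.mp hsp)
    have hsq' := hsq.length_le
    rw [if_neg hsp, if_pos hsq, abs_le]
    constructor <;> push_cast [← Nat.cast_le (α := ℝ)] at * <;> linarith
  · rw [if_neg hsp, if_neg hsq, sub_zero, abs_zero, sub_nonneg]
    exact_mod_cast hlp

theorem weight_sub_weight_take_lcp_succ {p q : List ℕ} (h : lcp p q < p.length) :
    weight p (p.take (lcp p q + 1)) - weight q (p.take (lcp p q + 1)) = p.length - lcp p q := by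
  have hlen : (p.take (lcp p q + 1)).length = lcp p q + 1 := by
    rw [List.length_take]; omega
  have hq : ¬ p.take (lcp p q + 1) <+: q := by
    rw [isPrefix_iff_length_le_lcp q (List.take_prefix _ p), hlen]; omega
  rw [weight, weight, if_pos (List.take_prefix _ p), if_neg hq, hlen]
  push_cast
  ring

section UpperEstimate

variable {ι Y : Type*} [NormedAddCommGroup Y] [NormedSpace ℝ Y]

def LInftyUpperBound (Z : ι → Y) (B : ℕ) (C : ℝ) : Prop :=
  ∀ S : Finset ι, S.card ≤ B → ∀ d : ι → ℝ, (∀ s ∈ S, |d s| ≤ 1) → ‖∑ s ∈ S, d s • Z s‖ ≤ C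

namespace LInftyUpperBound

variable {Z : ι → Y} {B : ℕ} {C : ℝ}

theorem nonneg (hZ : LInftyUpperBound Z B C) : 0 ≤ C := by
  simpa using hZ ∅ (by simp) 0 (by simp)

theorem norm_le (hZ : LInftyUpperBound Z B C) (hB : 1 ≤ B) (s : ι) : ‖Z s‖ ≤ C := by
  classical
  simpa using hZ {s} (by simpa using hB) 1 (by simp)

theorem norm_sum_le (hZ : LInftyUpperBound Z B C) {S : Finset ι} (hS : S.card ≤ B)
    {d : ι → ℝ} {r : ℝ} (hr : 0 < r) (hd : ∀ s ∈ S, |d s| ≤ r) :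
    ‖∑ s ∈ S, d s • Z s‖ ≤ r * C := by
  have hscale : ∑ s ∈ S, d s • Z s = r • ∑ s ∈ S, (d s / r) • Z s := by
    simp only [Finset.smul_sum, smul_smul, mul_div_cancel₀ _ hr.ne']
  rw [hscale, norm_smul, Real.norm_of_nonneg hr.le]
  refine mul_le_mul_of_nonneg_left (hZ S hS _ fun s hs => ?_) hr.le
  rw [abs_div, abs_of_pos hr, div_le_one hr]
  exact hd s hs

/-- Subtracting the combination from `2r • Z s₀` leaves coefficients bounded by `r`. -/
theorem mul_sub_le_norm_sum [DecidableEq ι] (hZ : LInftyUpperBound Z B C) {S : Finset ι}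
    (hS : S.card ≤ B) {d : ι → ℝ} {r c : ℝ} (hr : 0 < r) (hd : ∀ s ∈ S, |d s| ≤ r)
    {s₀ : ι} (hs₀ : s₀ ∈ S) (hds₀ : d s₀ = r) (hc : c ≤ ‖Z s₀‖) :
    r * (2 * c - C) ≤ ‖∑ s ∈ S, d s • Z s‖ := by
  set T := ∑ s ∈ S, d s • Z s
  have hreflect : ∑ s ∈ S, ((if s = s₀ then 2 * r else 0) - d s) • Z s = (2 * r) • Z s₀ - T := by
    simp only [sub_smul, Finset.sum_sub_distrib, ite_smul, zero_smul, Finset.sum_ite_eq',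
      if_pos hs₀, T]
  have hbound : ‖(2 * r) • Z s₀ - T‖ ≤ r * C := by
    rw [← hreflect]
    refine hZ.norm_sum_le hS hr fun s hs => ?_
    by_cases h : s = s₀
    · rw [if_pos h, h, hds₀, abs_of_nonneg (by linarith)]
      linarith
    · rw [if_neg h, zero_sub, abs_neg]
      exact hd s hs
  have htriangle : ‖(2 * r) • Z s₀‖ ≤ ‖(2 * r) • Z s₀ - T‖ + ‖T‖ := norm_le_norm_sub_add _ _
  rw [norm_smul, Real.norm_of_nonneg (by linarith)] at htriangle
  nlinarith

end LInftyUpperBound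

end UpperEstimate

section TreeMap

variable {Y : Type*} [NormedAddCommGroup Y] [NormedSpace ℝ Y]

/-- The paper's `f_k(p) = ∑_{u ⪯ p} ∑_{s ⪯ u} Z s`, regrouped by `s`. -/
def treeMap (Z : List ℕ → Y) (p : List ℕ) : Y := ∑ s ∈ p.inits.toFinset, weight p s • Z s

theorem treeMap_eq_sum_of_subset (Z : List ℕ → Y) {p : List ℕ} {S : Finset (List ℕ)}
    (h : p.inits.toFinset ⊆ S) : treeMap Z p = ∑ s ∈ S, weight p s • Z s := by
  refine Finset.sum_subset h fun s _ hs => ?_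
  rw [List.mem_toFinset, List.mem_inits] at hs
  rw [weight, if_neg hs, zero_smul]

theorem treeMap_sub_eq_sum (Z : List ℕ → Y) (p q : List ℕ) :
    treeMap Z p - treeMap Z q = ∑ s ∈ p.inits.toFinset ∪ q.inits.toFinset,
      (weight p s - weight q s) • Z s := by
  rw [treeMap_eq_sum_of_subset Z Finset.subset_union_left,
    treeMap_eq_sum_of_subset Z Finset.subset_union_right, ← Finset.sum_sub_distrib]
  simp only [sub_smul]

theorem card_inits_union_le (p q : List ℕ) :
    (p.inits.toFinset ∪ q.inits.toFinset).card ≤ p.length + q.length + 2 := by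
  have hp := List.toFinset_card_le p.inits
  have hq := List.toFinset_card_le q.inits
  rw [List.length_inits] at hp hq
  have := Finset.card_union_le p.inits.toFinset q.inits.toFinset
  omega

theorem LInftyUpperBound.treeMap_sub_bounds_of_length_le {Z : List ℕ → Y} {B : ℕ} {c C : ℝ}
    (hZ : LInftyUpperBound Z B C) (hc : ∀ s, c ≤ ‖Z s‖) {p q : List ℕ}
    (hB : p.length + q.length + 2 ≤ B) (hqp : q.length ≤ p.length) (hne : p ≠ q) :
    (p.length - lcp p q) * (2 * c - C) ≤ ‖treeMap Z p - treeMap Z q‖ ∧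
      ‖treeMap Z p - treeMap Z q‖ ≤ (p.length - lcp p q) * C := by
  have hlt := lcp_lt_length hqp hne
  have hpos : (0 : ℝ) < p.length - lcp p q := sub_pos.mpr (by exact_mod_cast hlt)
  have hS := (card_inits_union_le p q).trans hB
  have hd := abs_weight_sub_weight_le hqp
  rw [treeMap_sub_eq_sum]
  refine ⟨hZ.mul_sub_le_norm_sum hS hpos (fun s _ => hd s) ?_
    (weight_sub_weight_take_lcp_succ hlt) (hc _), hZ.norm_sum_le hS hpos fun s _ => hd s⟩
  exact Finset.mem_union_left _
    (List.mem_toFinset.mpr ((List.mem_inits _ _).mpr (List.take_prefix _ p)))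

theorem LInftyUpperBound.treeMap_sub_bounds {Z : List ℕ → Y} {B : ℕ} {c C : ℝ}
    (hZ : LInftyUpperBound Z B C) (hc : ∀ s, c ≤ ‖Z s‖) {p q : List ℕ}
    (hB : p.length + q.length + 2 ≤ B) :
    treeDist p q * (2 * c - C) / 2 ≤ ‖treeMap Z p - treeMap Z q‖ ∧
      ‖treeMap Z p - treeMap Z q‖ ≤ treeDist p q * C := by
  wlog hqp : q.length ≤ p.length generalizing p q
  · rw [norm_sub_rev, treeDist_comm]
    exact this (by omega) (by omega)
  rcases eq_or_ne p q with rfl | hne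
  · simp [treeDist, lcp_self, two_mul]
  obtain ⟨hlow, hup⟩ := hZ.treeMap_sub_bounds_of_length_le hc hB hqp hne
  have hC := hZ.nonneg
  have hlq : (lcp p q : ℝ) ≤ q.length := by exact_mod_cast lcp_le_length_right p q
  have hqp' : (q.length : ℝ) ≤ p.length := by exact_mod_cast hqp
  rw [cast_treeDist]
  constructor
  · rcases le_total 0 (2 * c - C) with h | h
    · nlinarith
    · nlinarith [norm_nonneg (treeMap Z p - treeMap Z q)]
  · nlinarith

end TreeMap

section AsymptoticSup

open Finsupp

variable {Y : Type*} [NormedAddCommGroup Y] [NormedSpace ℝ Y]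

def tailCoeffs (P R : ℕ) : Set (ℕ →₀ ℝ) :=
  {c | c.support.card ≤ P ∧ (∀ i ∈ c.support, R ≤ i) ∧ ∀ i, |c i| ≤ 1}

noncomputable def tailSup (y : ℕ → Y) (P R : ℕ) : ℝ :=
  sSup ((fun c => ‖linearCombination ℝ y c‖) '' tailCoeffs P R)

noncomputable def asymptoticSup (y : ℕ → Y) (P : ℕ) : ℝ := ⨅ R, tailSup y P R

theorem zero_mem_tailCoeffs (P R : ℕ) : (0 : ℕ →₀ ℝ) ∈ tailCoeffs P R := by
  simp [tailCoeffs]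

theorem single_mem_tailCoeffs {P : ℕ} (hP : 1 ≤ P) (R : ℕ) :
    single R (1 : ℝ) ∈ tailCoeffs P R := by
  refine ⟨by simpa using hP, by simp, fun i => ?_⟩
  rw [single_apply]
  split_ifs <;> simp

theorem tailCoeffs_mono {P P' R R' : ℕ} (hP : P ≤ P') (hR : R' ≤ R) :
    tailCoeffs P R ⊆ tailCoeffs P' R' :=
  fun _ ⟨hcard, hsupp, hc⟩ => ⟨hcard.trans hP, fun i hi => hR.trans (hsupp i hi), hc⟩

theorem sum_smul_mem_tailCoeffs {ι : Type*} {P R : ℕ} {S : Finset ι} {b : ι → ℕ →₀ ℝ}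
    (hb : ∀ s ∈ S, b s ∈ tailCoeffs P R)
    (hdisj : (S : Set ι).PairwiseDisjoint fun s => (b s).support)
    {d : ι → ℝ} (hd : ∀ s ∈ S, |d s| ≤ 1) :
    ∑ s ∈ S, d s • b s ∈ tailCoeffs (S.card * P) R := by
  classical
  have hsupp : (∑ s ∈ S, d s • b s).support ⊆ S.biUnion fun s => (b s).support :=
    support_finsetSum.trans (Finset.biUnion_mono fun _ _ => support_smul)
  refine ⟨?_, fun i hi => ?_, fun i => ?_⟩
  · calc (∑ s ∈ S, d s • b s).support.card ≤ (S.biUnion fun s => (b s).support).card :=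
          Finset.card_le_card hsupp
      _ ≤ ∑ s ∈ S, (b s).support.card := Finset.card_biUnion_le
      _ ≤ S.card * P := Finset.sum_le_card_nsmul _ _ _ fun s hs => (hb s hs).1
  · obtain ⟨s, hs, hi⟩ := Finset.mem_biUnion.mp (hsupp hi)
    exact (hb s hs).2.1 i hi
  rw [finsetSum_apply]
  by_cases hi : ∃ s ∈ S, i ∈ (b s).support
  · obtain ⟨s₀, hs₀, hi₀⟩ := hi
    rw [Finset.sum_eq_single_of_mem s₀ hs₀ fun s hs hne => ?_]
    · rw [Finsupp.smul_apply, smul_eq_mul, abs_mul]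
      exact mul_le_one₀ (hd s₀ hs₀) (abs_nonneg _) ((hb s₀ hs₀).2.2 i)
    · have : i ∉ (b s).support := Finset.disjoint_left.mp (hdisj hs₀ hs hne.symm) hi₀
      rw [Finsupp.smul_apply, notMem_support_iff.mp this, smul_zero]
  · push Not at hi
    rw [Finset.sum_eq_zero fun s hs => by
      rw [Finsupp.smul_apply, notMem_support_iff.mp (hi s hs), smul_zero], abs_zero]
    exact zero_le_one

theorem norm_linearCombination_le_of_mem_tailCoeffs {y : ℕ → Y} (hy : ∀ i, ‖y i‖ ≤ 1)
    {P R : ℕ} {c : ℕ →₀ ℝ} (hc : c ∈ tailCoeffs P R) : ‖linearCombination ℝ y c‖ ≤ P := by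
  rw [linearCombination_apply, Finsupp.sum]
  calc ‖∑ i ∈ c.support, c i • y i‖ ≤ ∑ i ∈ c.support, ‖c i • y i‖ := norm_sum_le _ _
    _ ≤ ∑ _i ∈ c.support, (1 : ℝ) := Finset.sum_le_sum fun i _ => by
        rw [norm_smul, Real.norm_eq_abs]
        exact mul_le_one₀ (hc.2.2 i) (norm_nonneg _) (hy i)
    _ ≤ P := by simpa using hc.1

theorem le_tailSup {y : ℕ → Y} (hy : ∀ i, ‖y i‖ ≤ 1) {P R : ℕ} {c : ℕ →₀ ℝ}
    (hc : c ∈ tailCoeffs P R) : ‖linearCombination ℝ y c‖ ≤ tailSup y P R :=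
  le_csSup ⟨P, Set.forall_mem_image.mpr fun _ hc' =>
    norm_linearCombination_le_of_mem_tailCoeffs hy hc'⟩ ⟨c, hc, rfl⟩

theorem tailSup_le {y : ℕ → Y} {P R : ℕ} {K : ℝ}
    (hK : ∀ c ∈ tailCoeffs P R, ‖linearCombination ℝ y c‖ ≤ K) : tailSup y P R ≤ K :=
  csSup_le ⟨_, 0, zero_mem_tailCoeffs P R, rfl⟩ (Set.forall_mem_image.mpr hK)

theorem asymptoticSup_le_tailSup {y : ℕ → Y} (hy : ∀ i, ‖y i‖ ≤ 1) (P R : ℕ) :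
    asymptoticSup y P ≤ tailSup y P R :=
  ciInf_le (f := tailSup y P) ⟨0, Set.forall_mem_range.mpr fun R =>
    (norm_nonneg _).trans (le_tailSup hy (zero_mem_tailCoeffs P R))⟩ R

theorem one_le_asymptoticSup {y : ℕ → Y} (hy : ∀ i, ‖y i‖ = 1) {P : ℕ} (hP : 1 ≤ P) :
    1 ≤ asymptoticSup y P :=
  le_ciInf fun R => by
    simpa [hy R] using le_tailSup (fun i => (hy i).le) (single_mem_tailCoeffs hP R)

/-- A combination of at most `P` vectors `y i` with `P ≤ i` is Schreier admissible. -/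
theorem asymptoticSup_le_of_schreier {y : ℕ → Y} (hy : ∀ i, ‖y i‖ ≤ 1) {K : ℝ}
    (hK : ∀ c : ℕ →₀ ℝ, (∀ i ∈ c.support, c.support.card ≤ i) → (∀ i, |c i| ≤ 1) →
      ‖linearCombination ℝ y c‖ ≤ K) (P : ℕ) :
    asymptoticSup y P ≤ K :=
  (asymptoticSup_le_tailSup hy P P).trans <| tailSup_le fun c ⟨hcard, hsupp, hc⟩ =>
    hK c (fun i hi => hcard.trans (hsupp i hi)) hc

theorem exists_tailSup_lt (y : ℕ → Y) (P : ℕ) {δ : ℝ} (hδ : 0 < δ) :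
    ∃ R, tailSup y P R < asymptoticSup y P + δ :=
  exists_lt_of_ciInf_lt (lt_add_of_pos_right _ hδ)

theorem exists_mem_tailCoeffs_lt_norm {y : ℕ → Y} (hy : ∀ i, ‖y i‖ ≤ 1) (P R : ℕ) {δ : ℝ}
    (hδ : 0 < δ) : ∃ c ∈ tailCoeffs P R, asymptoticSup y P - δ < ‖linearCombination ℝ y c‖ := by
  obtain ⟨_, ⟨c, hc, rfl⟩, hlt⟩ := exists_lt_of_lt_csSup
    (Set.Nonempty.image _ ⟨0, zero_mem_tailCoeffs P R⟩)
    ((sub_lt_self _ hδ).trans_le (asymptoticSup_le_tailSup hy P R))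
  exact ⟨c, hc, hlt⟩

end AsymptoticSup

theorem exists_succ_le_one_add_mul {s : ℕ → ℝ} {K δ : ℝ} (h0 : 0 < s 0) (hK : ∀ t, s t ≤ K)
    (hδ : 0 < δ) : ∃ t, s (t + 1) ≤ (1 + δ) * s t := by
  by_contra! hgrow
  have hpow : ∀ t, (1 + δ) ^ t * s 0 ≤ s t := by
    intro t
    induction t with
    | zero => simp
    | succ t ih =>
      rw [pow_succ', mul_assoc]
      exact (mul_le_mul_of_nonneg_left ih (by linarith)).trans (hgrow t).le
  obtain ⟨T, hT⟩ := pow_unbounded_of_one_lt (K / s 0) (lt_add_of_pos_right 1 hδ)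
  have := (div_lt_iff₀ h0).mp hT
  linarith [hpow T, hK T]

theorem exists_pairwise_disjoint_tail (F : ℕ → Finset ℕ) (hF : ∀ R, ∀ i ∈ F R, R ≤ i)
    (R₀ : ℕ) :
    ∃ r : ℕ → ℕ, (∀ j, R₀ ≤ r j) ∧ Pairwise fun m n => Disjoint (F (r m)) (F (r n)) := by
  let r : ℕ → ℕ := fun j => Nat.rec R₀ (fun _ R => R + (F R).sup id + 1) j
  have hmono : Monotone r := monotone_nat_of_le_succ fun j => by
    change r j ≤ r j + (F (r j)).sup id + 1
    omega
  have hlt : ∀ j, ∀ i ∈ F (r j), i < r (j + 1) := fun j i hi => by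
    change i < r j + (F (r j)).sup id + 1
    have := Finset.le_sup (f := id) hi
    simp only [id] at this
    omega
  refine ⟨r, fun j => hmono (Nat.zero_le j), (pairwise_disjoint_on _).mpr fun m n hmn => ?_⟩
  exact Finset.disjoint_left.mpr fun i him hin =>
    (hlt m i him).not_ge ((hmono hmn).trans (hF _ i hin))

section AlmostIsometricBlocks

open Finsupp

variable {Y : Type*} [NormedAddCommGroup Y] [NormedSpace ℝ Y]

theorem norm_linearCombination_le_of_schreier {y : ℕ → Y} {K : ℝ} (hK : 0 ≤ K)
    (hy : ∀ (k : ℕ) (n : Fin k → ℕ), StrictMono n → (∀ i, k ≤ n i) → ∀ a : Fin k → ℝ,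
      ‖∑ i, a i • y (n i)‖ ≤ K * ‖a‖)
    {c : ℕ →₀ ℝ} (hc : ∀ i ∈ c.support, c.support.card ≤ i) (hc1 : ∀ i, |c i| ≤ 1) :
    ‖linearCombination ℝ y c‖ ≤ K := by
  set n := c.support.orderEmbOfFin rfl
  have hsum : linearCombination ℝ y c = ∑ j, c (n j) • y (n j) := by
    have := Finset.sum_map Finset.univ n.toEmbedding fun i => c i • y i
    rw [c.support.map_orderEmbOfFin_univ rfl] at this
    rw [linearCombination_apply, Finsupp.sum, this]
    rfl
  rw [hsum]
  refine (hy _ n n.strictMono (fun j => hc _ (c.support.orderEmbOfFin_mem rfl j)) _).trans ?_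
  refine mul_le_of_le_one_right hK ((pi_norm_le_iff_of_nonneg zero_le_one).mpr fun j => ?_)
  exact (Real.norm_eq_abs _).trans_le (hc1 _)

/-- The blocks are disjointly supported tail combinations of `P = (B + 1) ^ t` vectors `y i`
with norm close to `asymptoticSup y P`, and their `B`-fold superpositions are tail combinations of
`(B + 1) P` of them. The asymptotic suprema are bounded, so for some `t` they grow by at most a
factor `1 + δ` from `P` to `(B + 1) P`. -/
theorem exists_linftyUpperBound_of_asymptoticSup (ι : Type*) [Countable ι] {y : ℕ → Y}
    (hy : ∀ i, ‖y i‖ = 1) {K : ℝ}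
    (hK : ∀ c : ℕ →₀ ℝ, (∀ i ∈ c.support, c.support.card ≤ i) → (∀ i, |c i| ≤ 1) →
      ‖linearCombination ℝ y c‖ ≤ K) (B : ℕ) {ε : ℝ} (hε : 0 < ε) :
    ∃ (Z : ι → Y) (c C : ℝ), 0 < c ∧ C ≤ (1 + ε) * c ∧ LInftyUpperBound Z B C ∧
      ∀ s, c ≤ ‖Z s‖ := by
  have hy1 : ∀ i, ‖y i‖ ≤ 1 := fun i => (hy i).le
  set σ : ℕ → ℝ := fun t => asymptoticSup y ((B + 1) ^ t)
  have hσ : ∀ t, 1 ≤ σ t := fun t => one_le_asymptoticSup hy (Nat.one_le_pow _ _ (by omega))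
  -- `δ = ε / (3 + ε)` makes `(1 + δ) σ + δ ≤ (1 + ε) (σ - δ)` whenever `1 ≤ σ`.
  set δ := ε / (3 + ε)
  have hδ : 0 < δ := by positivity
  have hδε : δ * (3 + ε) = ε := div_mul_cancel₀ ε (by positivity)
  have hδ1 : δ < 1 := by nlinarith
  have hδ_lt : δ < ε := by nlinarith
  obtain ⟨t, ht⟩ := exists_succ_le_one_add_mul (s := σ) (by linarith [hσ 0])
    (fun t => asymptoticSup_le_of_schreier hy1 hK _) hδ
  obtain ⟨R₀, hR₀⟩ := exists_tailSup_lt y ((B + 1) ^ (t + 1)) hδ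
  choose b hb hbnorm using fun R => exists_mem_tailCoeffs_lt_norm hy1 ((B + 1) ^ t) R hδ
  obtain ⟨r, hr, hdisj⟩ :=
    exists_pairwise_disjoint_tail (fun R => (b R).support) (fun R => (hb R).2.1) R₀
  obtain ⟨e, he⟩ := Countable.exists_injective_nat ι
  refine ⟨fun s => linearCombination ℝ y (b (r (e s))), σ t - δ, σ (t + 1) + δ,
    by linarith [hσ t], ?_, fun S hS d hd => ?_, fun s => (hbnorm _).le⟩
  · have hmargin : ε - δ ≤ (ε - δ) * σ t := le_mul_of_one_le_right (by linarith) (hσ t)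
    nlinarith
  have hmem : ∑ s ∈ S, d s • b (r (e s)) ∈ tailCoeffs ((B + 1) ^ (t + 1)) R₀ := by
    refine tailCoeffs_mono ?_ le_rfl (sum_smul_mem_tailCoeffs
      (fun s _ => tailCoeffs_mono le_rfl (hr (e s)) (hb _))
      ((hdisj.comp_of_injective he).set_pairwise _) hd)
    rw [pow_succ']
    exact Nat.mul_le_mul_right _ (by omega)
  simp only [← map_smul, ← map_sum]
  exact (le_tailSup hy1 hmem).trans hR₀.le

end AlmostIsometricBlocks

theorem trees_embed_from_c0_spreading_model_general
    {Y : Type*} [NormedAddCommGroup Y] [NormedSpace ℝ Y]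
    (ν : ℝ) (hν : 0 < ν) (y : ℕ → Y) (hnorm : ∀ n, ‖y n‖ = 1)
    (hc0 : ∀ (k : ℕ) (n : Fin k → ℕ), StrictMono n → (∀ i, k ≤ n i) →
      ∀ a : Fin k → ℝ,
        (1 / (1 + ν)) * ‖a‖ ≤ ‖∑ i, a i • y (n i)‖ ∧
        ‖∑ i, a i • y (n i)‖ ≤ (1 + ν) * ‖a‖) :
    ∀ k : ℕ, ∃ f : Finset ℕ → Y,
      ∀ u v : Finset ℕ, u.card ≤ k → v.card ≤ k →
        (dT u v : ℝ) / (2 * (1 + ν)) ≤ ‖f u - f v‖ ∧ ‖f u - f v‖ ≤ (dT u v : ℝ) := by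
  intro k
  have hschreier := fun c => norm_linearCombination_le_of_schreier (by linarith)
    (fun k n hn hk a => (hc0 k n hn hk a).2) (c := c)
  -- `ε = ν / (2 + ν)` is chosen so that `(1 - ε) / (1 + ε) = 1 / (1 + ν)`.
  obtain ⟨Z, c, C, hc, hCc, hZ, hZc⟩ := exists_linftyUpperBound_of_asymptoticSup (List ℕ) hnorm
    hschreier (2 * k + 2) (ε := ν / (2 + ν)) (by positivity)
  have hC : 0 < C := hc.trans_le ((hZc []).trans (hZ.norm_le (by omega) []))
  have hratio : C ≤ (1 + ν) * (2 * c - C) := by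
    have : (2 + ν) * (1 + ν / (2 + ν)) = 2 * (1 + ν) := by field_simp; ring
    nlinarith
  refine ⟨fun u => C⁻¹ • treeMap Z (u.sort (· ≤ ·)), fun u v hu hv => ?_⟩
  obtain ⟨hlow, hup⟩ := hZ.treeMap_sub_bounds hZc (p := u.sort (· ≤ ·)) (q := v.sort (· ≤ ·))
    (by simp only [Finset.length_sort]; omega)
  rw [← smul_sub, norm_smul, Real.norm_of_nonneg (inv_nonneg.mpr hC.le), dT_eq_treeDist,
    inv_mul_eq_div, le_div_iff₀ hC, div_le_iff₀ hC]
  have hD : (0 : ℝ) ≤ treeDist (u.sort (· ≤ ·)) (v.sort (· ≤ ·)) := Nat.cast_nonneg _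
  refine ⟨le_trans ?_ hlow, hup⟩
  rw [div_mul_eq_mul_div, div_le_div_iff₀ (by positivity) two_pos]
  nlinarith

/-- If `Y` contains a normalized sequence `(y_n)` such that for all
`k ≤ n_1 < ⋯ < n_k` and scalars `(a_i)`,
`(1/(1+ν)) max|a_i| ≤ ‖∑ a_i y_{n_i}‖ ≤ (1+ν) max|a_i|`, then for every `k` the
countably branching tree `T_k^ω = ([ℕ]^{≤k}, d_T)` maps into `Y` with
`d_T(x,y)/(2(1+ν)) ≤ ‖f_k(x) − f_k(y)‖ ≤ d_T(x,y)`; in particular the trees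
`(T_k^ω)` equi-bi-Lipschitzly embed into `Y`. -/
theorem trees_embed_from_c0_spreading_model
    {Y : Type*} [NormedAddCommGroup Y] [NormedSpace ℝ Y] [CompleteSpace Y]
    (ν : ℝ) (hν : 0 < ν) (y : ℕ → Y) (hnorm : ∀ n, ‖y n‖ = 1)
    (hc0 : ∀ (k : ℕ) (n : Fin k → ℕ), StrictMono n → (∀ i, k ≤ n i) →
      ∀ a : Fin k → ℝ,
        (1 / (1 + ν)) * ‖a‖ ≤ ‖∑ i, a i • y (n i)‖ ∧
        ‖∑ i, a i • y (n i)‖ ≤ (1 + ν) * ‖a‖) :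
    ∀ k : ℕ, ∃ f : Finset ℕ → Y,
      ∀ u v : Finset ℕ, u.card ≤ k → v.card ≤ k →
        (dT u v : ℝ) / (2 * (1 + ν)) ≤ ‖f u - f v‖ ∧ ‖f u - f v‖ ≤ (dT u v : ℝ) :=
  trees_embed_from_c0_spreading_model_general ν hν y hnorm hc0
end

section
/- Let Y be a reflexive Banach space with a bimonotone Schauder basis. For every k, r ∈ ℕ, every ε > 0, every infinite subset M of ℕ, and every Lipschitz map f : ([M]^k, d_H) → Y, there exist an infinite subset M' ⊂ M and a vector y ∈ Y such that for every m̄ ∈ [M']^k there are finitely supported vectors y^{(1)}_{m̄} ≺ y^{(2)}_{m̄} ≺ ... ≺ y^{(k)}_{m̄} with min supp(y^{(1)}_{m̄}) ≥ r, ‖y^{(i)}_{m̄}‖ ≤ Lip(f) for all i, and ‖f(m̄) − (y + y^{(1)}_{m̄} + ... + y^{(k)}_{m̄})‖ < ε. -/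
/-!
Fix a non-principal ultrafilter `U ∋ M` and induct on `k`. For a `k`-set `s`, the vectors
`f (s ∪ {n})` stay bounded as `n → U`, so by reflexivity they have a weak limit `g s`; by weak
lower semicontinuity of the norm `g` is again `L`-Lipschitz and `‖f (s ∪ {n}) - g s‖ ≤ L`.
Decompose `g` by induction. Since `f (s ∪ {n}) - g s → 0` coordinatewise, for `U`-most `n` this
difference almost vanishes on the coordinates carrying the blocks of `g s`, and a bimonotone
interval projection of it is the last block of `f (s ∪ {n})`. Each step only asks the next
element of `m̄` to lie in a `U`-large set depending on the previous elements; diagonalising these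
sets yields `M'`.
-/

/-- The Hamming distance `d_H` on finite subsets of `ℕ` (elements listed in increasing
order). -/
def dH (m n : Finset ℕ) : ℕ :=
  ((m.sort (· ≤ ·)).zip (n.sort (· ≤ ·))).countP (fun p => p.1 != p.2)
    + (max m.card n.card - min m.card n.card)

open Filter Finset Topology
open Finsupp (linearCombination)
open scoped List

section InsertMax

lemma Finset.card_insert_of_forall_lt {α : Type*} [LinearOrder α] {s : Finset α} {n : α}
    (h : ∀ x ∈ s, x < n) : (insert n s).card = s.card + 1 :=
  card_insert_of_notMem fun hn => (h n hn).false

lemma Finset.sort_insert_of_forall_lt {α : Type*} [LinearOrder α] {s : Finset α} {n : α}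
    (h : ∀ x ∈ s, x < n) :
    (insert n s).sort (· ≤ ·) = s.sort (· ≤ ·) ++ [n] := by
  refine (List.Perm.eq_of_pairwise' ?_ (pairwise_sort _ _) ?_).symm
  · rw [List.pairwise_append]
    exact ⟨pairwise_sort _ _, List.pairwise_singleton _ _, fun a ha b hb =>
      (List.mem_singleton.1 hb) ▸ (h a ((mem_sort _).1 ha)).le⟩
  · calc s.sort (· ≤ ·) ++ [n] ~ n :: s.toList :=
          (List.perm_append_singleton _ _).trans (.cons n (sort_perm_toList s _))
      _ ~ (insert n s).toList := (toList_insert fun hn => (h n hn).false).symm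
      _ ~ (insert n s).sort (· ≤ ·) := (sort_perm_toList _ _).symm

lemma Finset.exists_eq_insert_forall_lt {α : Type*} [LinearOrder α] {m : Finset α} {k : ℕ}
    (hm : m.card = k + 1) : ∃ n s, m = insert n s ∧ (∀ x ∈ s, x < n) ∧ s.card = k := by
  have hne : m.Nonempty := card_pos.1 (hm ▸ k.succ_pos)
  refine ⟨m.max' hne, m.erase (m.max' hne), (insert_erase (max'_mem _ _)).symm,
    fun x hx => lt_max'_of_mem_erase_max' _ hne hx, ?_⟩
  rw [card_erase_of_mem (max'_mem _ _), hm, Nat.add_sub_cancel]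

lemma dH_insert_insert {s t : Finset ℕ} {n : ℕ} (hs : ∀ x ∈ s, x < n) (ht : ∀ x ∈ t, x < n)
    (hst : s.card = t.card) : dH (insert n s) (insert n t) = dH s t := by
  have hlen : (s.sort (· ≤ ·)).length = (t.sort (· ≤ ·)).length := by simp [hst]
  rw [dH, dH, sort_insert_of_forall_lt hs, sort_insert_of_forall_lt ht, List.zip_append hlen,
    List.countP_append, card_insert_of_forall_lt hs, card_insert_of_forall_lt ht, hst]
  simp

lemma dH_insert_insert_of_ne {s : Finset ℕ} {n n' : ℕ} (hn : ∀ x ∈ s, x < n)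
    (hn' : ∀ x ∈ s, x < n') (hne : n ≠ n') : dH (insert n s) (insert n' s) = 1 := by
  have hdiag : ∀ l : List ℕ, (l.zip l).countP (fun p => p.1 != p.2) = 0 := fun l => by
    induction l with
    | nil => rfl
    | cons a l ih => simp [ih]
  rw [dH, sort_insert_of_forall_lt hn, sort_insert_of_forall_lt hn', List.zip_append rfl,
    List.countP_append, card_insert_of_forall_lt hn, card_insert_of_forall_lt hn', hdiag]
  simp [hne]

end InsertMax

section WeakLimits

variable {Y : Type*} [NormedAddCommGroup Y] [NormedSpace ℝ Y]

lemma exists_weak_ultralimit (hrefl : Function.Surjective (NormedSpace.inclusionInDoubleDual ℝ Y))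
    {α : Type*} (U : Ultrafilter α) {x : α → Y} {C : ℝ} (hx : ∀ᶠ a in U, ‖x a‖ ≤ C) :
    ∃ w : Y, ∀ φ : StrongDual ℝ Y, Tendsto (fun a => φ (x a)) U (𝓝 (φ w)) := by
  have hbound : ∀ φ : StrongDual ℝ Y, ∀ᶠ a in U, ‖φ (x a)‖ ≤ C * ‖φ‖ := fun φ =>
    hx.mono fun a ha => (φ.le_opNorm _).trans (by rw [mul_comm]; gcongr)
  have hlim : ∀ φ : StrongDual ℝ Y, ∃ c, Tendsto (fun a => φ (x a)) U (𝓝 c) := fun φ => by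
    obtain ⟨c, -, hc⟩ := (isCompact_closedBall (0 : ℝ) (C * ‖φ‖)).ultrafilter_le_nhds
      (U.map fun a => φ (x a))
      (le_principal_iff.2 <| (hbound φ).mono fun a ha => by simpa using ha)
    exact ⟨c, hc⟩
  choose ℓ hℓ using hlim
  let Φ : StrongDual ℝ Y →ₗ[ℝ] ℝ :=
    { toFun := ℓ
      map_add' := fun φ ψ => tendsto_nhds_unique (hℓ (φ + ψ)) ((hℓ φ).add (hℓ ψ))
      map_smul' := fun c φ => tendsto_nhds_unique (hℓ (c • φ)) ((hℓ φ).const_smul c) }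
  obtain ⟨w, hw⟩ := hrefl (Φ.mkContinuous C fun φ => le_of_tendsto (hℓ φ).norm (hbound φ))
  refine ⟨w, fun φ => ?_⟩
  rw [← NormedSpace.dual_def ℝ Y w φ, hw]
  exact hℓ φ

lemma norm_le_of_tendsto_dual {α : Type*} {l : Filter α} [l.NeBot] {x : α → Y} {w : Y} {C : ℝ}
    (hw : ∀ φ : StrongDual ℝ Y, Tendsto (fun a => φ (x a)) l (𝓝 (φ w)))
    (hx : ∀ᶠ a in l, ‖x a‖ ≤ C) : ‖w‖ ≤ C := by
  obtain ⟨φ, hφ, hφw⟩ := exists_dual_vector'' ℝ w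
  have hφw' : φ w = ‖w‖ := hφw
  rw [← hφw']
  refine le_of_tendsto (hw φ) (hx.mono fun a ha => ?_)
  calc φ (x a) ≤ ‖φ‖ * ‖x a‖ := (le_abs_self _).trans (φ.le_opNorm _)
    _ ≤ C := (mul_le_of_le_one_left (norm_nonneg _) hφ).trans ha

end WeakLimits

section Basis

variable {Y : Type*} [NormedAddCommGroup Y] [NormedSpace ℝ Y] {e : ℕ → Y} {coef : Y → ℕ → ℝ}

lemma tendsto_sum_pi_single_smul (e : ℕ → Y) (j : ℕ) :
    Tendsto (fun N => ∑ i ∈ range N, (Pi.single j (1 : ℝ) : ℕ → ℝ) i • e i) atTop (𝓝 (e j)) :=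
  tendsto_const_nhds.congr' <| (eventually_gt_atTop j).mono fun N hN => by
    simp [Pi.single_apply, hN]

lemma abs_coef_le_of_bimonotone
    (huniq : ∀ (a : ℕ → ℝ) (v : Y),
      Tendsto (fun N => ∑ i ∈ range N, a i • e i) atTop (𝓝 v) → a = coef v)
    (hbimono : ∀ (v : Y) (p q : ℕ), ‖∑ i ∈ Ico p q, coef v i • e i‖ ≤ ‖v‖) (v : Y) (i : ℕ) :
    |coef v i| ≤ ‖e i‖⁻¹ * ‖v‖ := by
  have he : e i ≠ 0 := fun h => by
    have hsingle := huniq _ _ (tendsto_sum_pi_single_smul e i)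
    have hzero := huniq 0 (e i) (by simp [h])
    simpa using congrFun (hsingle.trans hzero.symm) i
  have h := hbimono v i (i + 1)
  rw [Nat.Ico_succ_singleton, sum_singleton, norm_smul, Real.norm_eq_abs] at h
  rw [inv_mul_eq_div, le_div_iff₀ (norm_pos_iff.2 he)]
  exact h

noncomputable def SchauderBasis.ofBimonotone
    (hexp : ∀ v : Y, Tendsto (fun N => ∑ i ∈ range N, coef v i • e i) atTop (𝓝 v))
    (huniq : ∀ (a : ℕ → ℝ) (v : Y),
      Tendsto (fun N => ∑ i ∈ range N, a i • e i) atTop (𝓝 v) → a = coef v)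
    (hbimono : ∀ (v : Y) (p q : ℕ), ‖∑ i ∈ Ico p q, coef v i • e i‖ ≤ ‖v‖) :
    SchauderBasis ℝ Y where
  basis := e
  coord i := LinearMap.mkContinuous
    { toFun := fun v => coef v i
      map_add' := fun v w => congrFun (huniq (coef v + coef w) _ <| by
        simpa [add_smul, sum_add_distrib] using (hexp v).add (hexp w)).symm i
      map_smul' := fun c v => congrFun (huniq (c • coef v) _ <| by
        simpa [mul_smul, smul_sum] using (hexp v).const_smul c).symm i }
    ‖e i‖⁻¹ fun v => abs_coef_le_of_bimonotone huniq hbimono v i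
  ortho i j := by
    change coef (e j) i = _
    rw [← huniq _ _ (tendsto_sum_pi_single_smul e j)]
    congr
  expansion v := by
    rw [HasSum, SummationFilter.conditional_filter_eq_map_range, tendsto_map'_iff]
    exact hexp v

def SchauderBasis.IsBimonotone (b : SchauderBasis ℝ Y) : Prop :=
  ∀ (v : Y) (p q : ℕ), ‖∑ i ∈ Ico p q, b.coord i v • b i‖ ≤ ‖v‖

lemma SchauderBasis.eventually_norm_proj_sub_lt (b : SchauderBasis ℝ Y) {α : Type*}
    {l : Filter α} {x : α → Y} {w : Y}
    (hw : ∀ φ : StrongDual ℝ Y, Tendsto (fun a => φ (x a)) l (𝓝 (φ w))) (N : ℕ) {δ : ℝ}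
    (hδ : 0 < δ) : ∀ᶠ a in l, ‖b.proj N (x a - w)‖ < δ := by
  have h : Tendsto (fun a => b.proj N (x a - w)) l (𝓝 0) := by
    simpa using tendsto_finsetSum (range N) fun i _ =>
      ((hw (b.coord i)).sub_const (b.coord i w)).smul_const (b i)
  simpa using Metric.tendsto_nhds.1 h δ hδ

end Basis

section Blocks

variable {Y : Type*} [NormedAddCommGroup Y] [NormedSpace ℝ Y]

def IsBlockSeq (e : ℕ → Y) (r : ℕ) (L : ℝ) {k : ℕ} (v : Fin k → ℕ →₀ ℝ) : Prop :=
  (∀ i, ∀ a ∈ (v i).support, r ≤ a) ∧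
  (∀ i j, i < j → ∀ a ∈ (v i).support, ∀ c ∈ (v j).support, a < c) ∧
  ∀ i, ‖linearCombination ℝ e (v i)‖ ≤ L

def ApproxByBlocks (e : ℕ → Y) (r : ℕ) (L : ℝ) (k : ℕ) (ε : ℝ) (y x : Y) : Prop :=
  ∃ v : Fin k → ℕ →₀ ℝ, IsBlockSeq e r L v ∧ ‖x - (y + ∑ i, linearCombination ℝ e (v i))‖ < ε

lemma approxByBlocks_zero (e : ℕ → Y) (r : ℕ) (L : ℝ) {ε : ℝ} (hε : 0 < ε) (x : Y) :
    ApproxByBlocks e r L 0 ε x x :=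
  ⟨finZeroElim, ⟨finZeroElim, finZeroElim, finZeroElim⟩, by simpa using hε⟩

lemma exists_support_lt {k : ℕ} (v : Fin k → ℕ →₀ ℝ) (r : ℕ) :
    ∃ R, r ≤ R ∧ ∀ i, ∀ a ∈ (v i).support, a < R := by
  obtain ⟨n, hn⟩ := exists_nat_subset_range (univ.biUnion fun i => (v i).support)
  exact ⟨max r n, le_max_left _ _, fun i a ha =>
    (mem_range.1 (hn (mem_biUnion.2 ⟨i, mem_univ _, ha⟩))).trans_le (le_max_right _ _)⟩

lemma IsBlockSeq.snoc {e : ℕ → Y} {r R k : ℕ} {L : ℝ} {v : Fin k → ℕ →₀ ℝ} {z : ℕ →₀ ℝ}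
    (hv : IsBlockSeq e r L v) (hrR : r ≤ R) (hvR : ∀ i, ∀ a ∈ (v i).support, a < R)
    (hzR : ∀ a ∈ z.support, R ≤ a) (hzL : ‖linearCombination ℝ e z‖ ≤ L) :
    IsBlockSeq e r L (Fin.snoc v z) := by
  obtain ⟨hvr, hvlt, hvL⟩ := hv
  refine ⟨fun i => ?_, fun i j hij => ?_, fun i => ?_⟩
  · induction i using Fin.lastCases with
    | last => simpa using fun a ha => hrR.trans (hzR a ha)
    | cast i => simpa using hvr i
  · induction j using Fin.lastCases with
    | last =>
      obtain ⟨i, rfl⟩ := Fin.exists_castSucc_eq.2 (Fin.ne_last_of_lt hij)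
      simpa using fun a ha c hc => (hvR i a ha).trans_le (hzR c hc)
    | cast j =>
      obtain ⟨i, rfl⟩ := Fin.exists_castSucc_eq.2
        (Fin.ne_last_of_lt (hij.trans (Fin.castSucc_lt_last j)))
      simpa using hvlt i j (Fin.castSucc_lt_castSucc_iff.1 hij)
  · induction i using Fin.lastCases with
    | last => simpa using hzL
    | cast i => simpa using hvL i

variable {b : SchauderBasis ℝ Y}

lemma SchauderBasis.IsBimonotone.exists_block (hb : b.IsBimonotone) (w : Y) (R : ℕ) {δ : ℝ}
    (hδ : 0 < δ) :
    ∃ z : ℕ →₀ ℝ, (∀ a ∈ z.support, R ≤ a) ∧ ‖linearCombination ℝ b z‖ ≤ ‖w‖ ∧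
      ‖w - linearCombination ℝ b z‖ < ‖b.proj R w‖ + δ := by
  obtain ⟨N₀, hN₀⟩ := Metric.tendsto_atTop.1 (b.tendsto_proj w) δ hδ
  set N := max R N₀
  let z : ℕ →₀ ℝ := Finsupp.indicator (Ico R N) fun j _ => b.coord j w
  have hzsupp : ↑z.support ⊆ (Ico R N : Set ℕ) := Finsupp.support_indicator_subset _ _
  have hz : linearCombination ℝ b z = ∑ j ∈ Ico R N, b.coord j w • b j := by
    rw [Finsupp.linearCombination_apply_of_mem_supported ℝ hzsupp]
    exact sum_congr rfl fun j hj => by rw [Finsupp.indicator_of_mem hj]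
  have hsplit : w - linearCombination ℝ b z = (w - b.proj N w) + b.proj R w := by
    rw [hz, SchauderBasis.proj_apply, SchauderBasis.proj_apply,
      ← sum_range_add_sum_Ico _ (le_max_left R N₀)]
    abel
  refine ⟨z, fun a ha => (mem_Ico.1 (hzsupp ha)).1, hz ▸ hb w R N, ?_⟩
  calc ‖w - linearCombination ℝ b z‖ ≤ ‖w - b.proj N w‖ + ‖b.proj R w‖ :=
        hsplit ▸ norm_add_le _ _
    _ < δ + ‖b.proj R w‖ := by
        gcongr
        rw [← dist_eq_norm']
        exact hN₀ N (le_max_right _ _)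
    _ = ‖b.proj R w‖ + δ := add_comm _ _

lemma SchauderBasis.IsBimonotone.approxByBlocks_succ (hb : b.IsBimonotone) {r R k : ℕ} {L : ℝ}
    {v : Fin k → ℕ →₀ ℝ} (hv : IsBlockSeq b r L v) (hrR : r ≤ R)
    (hvR : ∀ i, ∀ a ∈ (v i).support, a < R) {y x x' : Y} {δ η : ℝ}
    (hx : ‖x - (y + ∑ i, linearCombination ℝ b (v i))‖ < δ) (hx' : ‖x' - x‖ ≤ L)
    (hhead : ‖b.proj R (x' - x)‖ < η) :
    ApproxByBlocks b r L (k + 1) (δ + 2 * η) y x' := by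
  obtain ⟨z, hzR, hzL, hz⟩ := hb.exists_block (x' - x) R ((norm_nonneg _).trans_lt hhead)
  refine ⟨Fin.snoc v z, hv.snoc hrR hvR hzR (hzL.trans hx'), ?_⟩
  simp only [Fin.sum_univ_castSucc, Fin.snoc_castSucc, Fin.snoc_last]
  calc ‖x' - (y + (∑ i, linearCombination ℝ b (v i) + linearCombination ℝ b z))‖
      = ‖(x - (y + ∑ i, linearCombination ℝ b (v i))) + (x' - x - linearCombination ℝ b z)‖ := by
        congr 1; abel
    _ ≤ ‖x - (y + ∑ i, linearCombination ℝ b (v i))‖ + ‖x' - x - linearCombination ℝ b z‖ :=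
        norm_add_le _ _
    _ < δ + 2 * η := by linarith

end Blocks

section Admissible

def Admissible (G : Finset ℕ → Set ℕ) (m : Finset ℕ) : Prop :=
  ∀ a ∈ m, a ∈ G {x ∈ m | x < a}

lemma Admissible.mono {G G' : Finset ℕ → Set ℕ} (hG : ∀ s, G s ⊆ G' s) {m : Finset ℕ}
    (hm : Admissible G m) : Admissible G' m :=
  fun a ha => hG _ (hm a ha)

lemma admissible_insert_iff {G : Finset ℕ → Set ℕ} {s : Finset ℕ} {n : ℕ}
    (hn : ∀ x ∈ s, x < n) : Admissible G (insert n s) ↔ Admissible G s ∧ n ∈ G s := by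
  have hsn : {x ∈ insert n s | x < n} = s := by
    rw [filter_insert, if_neg (lt_irrefl n), filter_true_of_mem hn]
  have hsa : ∀ a ∈ s, {x ∈ insert n s | x < a} = {x ∈ s | x < a} := fun a ha => by
    rw [filter_insert, if_neg (hn a ha).asymm]
  constructor
  · intro h
    refine ⟨fun a ha => ?_, hsn ▸ h n (mem_insert_self n s)⟩
    rw [← hsa a ha]
    exact h a (mem_insert_of_mem ha)
  · rintro ⟨h, hnG⟩ a ha
    rcases mem_insert.1 ha with rfl | ha
    · rwa [hsn]
    · rw [hsa a ha]
      exact h a ha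

lemma exists_infinite_admissible {U : Ultrafilter ℕ} (hU : (U : Filter ℕ) ≤ atTop) {M : Set ℕ}
    (hMU : M ∈ U) {G : Finset ℕ → Set ℕ} (hG : ∀ s, G s ∈ U) :
    ∃ M' ⊆ M, M'.Infinite ∧ ∀ m : Finset ℕ, ↑m ⊆ M' → Admissible G m := by
  have hc : ∀ x, ∃ c ∈ M, x < c ∧ ∀ s ∈ (range (x + 1)).powerset, c ∈ G s := fun x =>
    (Filter.Eventually.and hMU (((eventually_gt_atTop x).filter_mono hU).and
      ((eventually_all_finset _).2 fun s _ => hG s))).exists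
  -- `c x` may follow any set of elements `≤ x`
  choose c hcM hxc hcG using hc
  set q : ℕ → ℕ := fun j => c^[j] 0
  have hq_succ : ∀ j, q (j + 1) = c (q j) := fun j => Function.iterate_succ_apply' c j 0
  have hq : StrictMono q := strictMono_nat_of_lt_succ fun j => hq_succ j ▸ hxc (q j)
  refine ⟨Set.range fun j => q (j + 1), ?_,
    Set.infinite_range_of_injective (hq.injective.comp Nat.succ_injective), fun m hm a ha => ?_⟩
  · rintro _ ⟨j, rfl⟩
    simpa only [hq_succ] using hcM (q j)
  · obtain ⟨j, rfl⟩ := hm ha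
    have hmq : ∀ x ∈ m, x < q (j + 1) → x < q j + 1 := fun x hx hxa => by
      obtain ⟨i, rfl⟩ := hm hx
      have := hq.lt_iff_lt.1 hxa
      exact Nat.lt_succ_of_le (hq.monotone (by omega))
    have := hcG (q j) {x ∈ m | x < q (j + 1)} <| mem_powerset.2 fun x hx =>
      mem_range.2 (hmq x (mem_filter.1 hx).1 (mem_filter.1 hx).2)
    rwa [← hq_succ] at this

lemma Set.Infinite.exists_ultrafilter_le_atTop {M : Set ℕ} (hM : M.Infinite) :
    ∃ U : Ultrafilter ℕ, M ∈ U ∧ (U : Filter ℕ) ≤ atTop := by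
  have : (atTop ⊓ 𝓟 M).NeBot :=
    frequently_mem_iff_neBot.1 (Nat.frequently_atTop_iff_infinite.2 hM)
  obtain ⟨U, hU⟩ := Ultrafilter.exists_le (atTop ⊓ 𝓟 M)
  exact ⟨U, le_principal_iff.1 (hU.trans inf_le_right), hU.trans inf_le_left⟩

end Admissible

section LipschitzOnCard

variable {Y : Type*} [SeminormedAddCommGroup Y]

def LipschitzOnCard (k : ℕ) (M : Set ℕ) (f : Finset ℕ → Y) (L : ℝ) : Prop :=
  ∀ m n : Finset ℕ, m.card = k → n.card = k → ↑m ⊆ M → ↑n ⊆ M → ‖f m - f n‖ ≤ L * dH m n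

variable {k : ℕ} {M : Set ℕ} {f : Finset ℕ → Y} {L : ℝ} {s t : Finset ℕ} {n n' : ℕ}

lemma LipschitzOnCard.norm_sub_insert_insert_le (hf : LipschitzOnCard (k + 1) M f L)
    (hs : s.card = k) (ht : t.card = k) (hsM : ↑s ⊆ M) (htM : ↑t ⊆ M) (hn : n ∈ M)
    (hns : ∀ x ∈ s, x < n) (hnt : ∀ x ∈ t, x < n) :
    ‖f (insert n s) - f (insert n t)‖ ≤ L * dH s t := by
  have h := hf _ _ (by rw [card_insert_of_forall_lt hns, hs])
    (by rw [card_insert_of_forall_lt hnt, ht]) (by simpa using Set.insert_subset hn hsM)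
    (by simpa using Set.insert_subset hn htM)
  rwa [dH_insert_insert hns hnt (hs.trans ht.symm)] at h

lemma LipschitzOnCard.norm_sub_insert_le (hf : LipschitzOnCard (k + 1) M f L) (hs : s.card = k)
    (hsM : ↑s ⊆ M) (hn : n ∈ M) (hn' : n' ∈ M) (hns : ∀ x ∈ s, x < n) (hn's : ∀ x ∈ s, x < n')
    (hne : n ≠ n') : ‖f (insert n s) - f (insert n' s)‖ ≤ L := by
  have h := hf _ _ (by rw [card_insert_of_forall_lt hns, hs])
    (by rw [card_insert_of_forall_lt hn's, hs]) (by simpa using Set.insert_subset hn hsM)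
    (by simpa using Set.insert_subset hn' hsM)
  rwa [dH_insert_insert_of_ne hns hn's hne, Nat.cast_one, mul_one] at h

end LipschitzOnCard

section WeakLimitInsert

variable {Y : Type*} [NormedAddCommGroup Y] [NormedSpace ℝ Y] {U : Ultrafilter ℕ} {M : Set ℕ}
  {k : ℕ} {f g : Finset ℕ → Y} {L : ℝ}

lemma eventually_forall_lt (hU : (U : Filter ℕ) ≤ atTop) (s : Finset ℕ) :
    ∀ᶠ n in (U : Filter ℕ), ∀ x ∈ s, x < n :=
  (eventually_all_finset s).2 fun x _ => (eventually_gt_atTop x).filter_mono hU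

lemma LipschitzOnCard.exists_weak_limit_insert
    (hrefl : Function.Surjective (NormedSpace.inclusionInDoubleDual ℝ Y))
    (hU : (U : Filter ℕ) ≤ atTop) (hMU : M ∈ U) (hf : LipschitzOnCard (k + 1) M f L) :
    ∃ g : Finset ℕ → Y, ∀ s : Finset ℕ, s.card = k → ↑s ⊆ M → ∀ φ : StrongDual ℝ Y,
      Tendsto (fun n => φ (f (insert n s))) U (𝓝 (φ (g s))) := by
  have hlim : ∀ s : Finset ℕ, ∃ w : Y, s.card = k → ↑s ⊆ M → ∀ φ : StrongDual ℝ Y,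
      Tendsto (fun n => φ (f (insert n s))) U (𝓝 (φ w)) := by
    intro s
    by_cases hs : s.card = k ∧ ↑s ⊆ M
    · obtain ⟨n₀, hn₀M, hn₀s⟩ := (Filter.Eventually.and hMU (eventually_forall_lt hU s)).exists
      obtain ⟨w, hw⟩ := exists_weak_ultralimit hrefl U (x := fun n => f (insert n s))
        (C := ‖f (insert n₀ s)‖ + L) <| by
          filter_upwards [hMU, eventually_forall_lt hU s,
            (eventually_ne_atTop n₀).filter_mono hU] with n hnM hns hne
          have := hf.norm_sub_insert_le hs.1 hs.2 hnM hn₀M hns hn₀s hne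
          linarith [norm_le_insert' (f (insert n s)) (f (insert n₀ s))]
      exact ⟨w, fun _ _ => hw⟩
    · exact ⟨0, fun h1 h2 => (hs ⟨h1, h2⟩).elim⟩
  choose g hg using hlim
  exact ⟨g, hg⟩

lemma LipschitzOnCard.of_weak_limit_insert (hU : (U : Filter ℕ) ≤ atTop) (hMU : M ∈ U)
    (hf : LipschitzOnCard (k + 1) M f L)
    (hg : ∀ s : Finset ℕ, s.card = k → ↑s ⊆ M → ∀ φ : StrongDual ℝ Y,
      Tendsto (fun n => φ (f (insert n s))) U (𝓝 (φ (g s)))) :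
    LipschitzOnCard k M g L := by
  intro s t hs ht hsM htM
  refine norm_le_of_tendsto_dual (x := fun n => f (insert n s) - f (insert n t))
    (fun φ => by simpa using (hg s hs hsM φ).sub (hg t ht htM φ)) ?_
  filter_upwards [hMU, eventually_forall_lt hU (s ∪ t)] with n hnM hn
  exact hf.norm_sub_insert_insert_le hs ht hsM htM hnM (fun x hx => hn x (mem_union_left _ hx))
    (fun x hx => hn x (mem_union_right _ hx))

lemma LipschitzOnCard.norm_sub_weak_limit_insert_le (hU : (U : Filter ℕ) ≤ atTop) (hMU : M ∈ U)
    (hf : LipschitzOnCard (k + 1) M f L) {s : Finset ℕ} {w : Y}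
    (hw : ∀ φ : StrongDual ℝ Y, Tendsto (fun n => φ (f (insert n s))) U (𝓝 (φ w)))
    (hs : s.card = k) (hsM : ↑s ⊆ M) {n : ℕ} (hn : n ∈ M) (hns : ∀ x ∈ s, x < n) :
    ‖f (insert n s) - w‖ ≤ L := by
  refine norm_le_of_tendsto_dual (x := fun n' => f (insert n s) - f (insert n' s))
    (fun φ => by simpa using (hw φ).const_sub (φ (f (insert n s)))) ?_
  filter_upwards [hMU, eventually_forall_lt hU s, (eventually_ne_atTop n).filter_mono hU]
    with n' hn'M hn's hne
  exact hf.norm_sub_insert_le hs hsM hn hn'M hns hn's (Ne.symm hne)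

end WeakLimitInsert

section Induction

variable {Y : Type*} [NormedAddCommGroup Y] [NormedSpace ℝ Y]

def HasAdmissibleBlockApprox (e : ℕ → Y) (r : ℕ) (U : Ultrafilter ℕ) (M : Set ℕ) (k : ℕ)
    (f : Finset ℕ → Y) (L ε : ℝ) : Prop :=
  ∃ (y : Y) (G : Finset ℕ → Set ℕ), (∀ s, G s ∈ U) ∧
    ∀ m : Finset ℕ, m.card = k → ↑m ⊆ M → Admissible G m → ApproxByBlocks e r L k ε y (f m)

variable {b : SchauderBasis ℝ Y} {U : Ultrafilter ℕ} {M : Set ℕ} {r k : ℕ} {L : ℝ}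

lemma hasAdmissibleBlockApprox_succ
    (hrefl : Function.Surjective (NormedSpace.inclusionInDoubleDual ℝ Y)) (hb : b.IsBimonotone)
    (hU : (U : Filter ℕ) ≤ atTop) (hMU : M ∈ U)
    (IH : ∀ {g : Finset ℕ → Y} {ε : ℝ}, LipschitzOnCard k M g L → 0 < ε →
      HasAdmissibleBlockApprox b r U M k g L ε)
    {f : Finset ℕ → Y} {ε : ℝ} (hf : LipschitzOnCard (k + 1) M f L) (hε : 0 < ε) :
    HasAdmissibleBlockApprox b r U M (k + 1) f L ε := by
  obtain ⟨g, hg⟩ := hf.exists_weak_limit_insert hrefl hU hMU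
  obtain ⟨y, G, hGU, hGg⟩ := IH (hf.of_weak_limit_insert hU hMU hg) (half_pos hε)
  have hblocks : ∀ s : Finset ℕ, ∃ (v : Fin k → ℕ →₀ ℝ) (R : ℕ),
      s.card = k → ↑s ⊆ M → Admissible G s →
      IsBlockSeq b r L v ∧ ‖g s - (y + ∑ i, linearCombination ℝ b (v i))‖ < ε / 2 ∧
        r ≤ R ∧ ∀ i, ∀ a ∈ (v i).support, a < R := by
    intro s
    by_cases hs : s.card = k ∧ ↑s ⊆ M ∧ Admissible G s
    · obtain ⟨v, hv, hgv⟩ := hGg s hs.1 hs.2.1 hs.2.2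
      obtain ⟨R, hrR, hvR⟩ := exists_support_lt v r
      exact ⟨v, R, fun _ _ _ => ⟨hv, hgv, hrR, hvR⟩⟩
    · exact ⟨0, 0, fun h1 h2 h3 => (hs ⟨h1, h2, h3⟩).elim⟩
  choose V R hVR using hblocks
  -- the new last element `n` must make the coordinates of `f (s ∪ {n}) - g s` below `R s` small,
  -- so that the new block can be cut off beyond the blocks `V s`
  let G' : Finset ℕ → Set ℕ := fun s => G s ∩ {n | s.card = k → ↑s ⊆ M →
    n ∈ M ∧ (∀ x ∈ s, x < n) ∧ ‖b.proj (R s) (f (insert n s) - g s)‖ < ε / 4}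
  refine ⟨y, G', fun s => Filter.inter_mem (hGU s) ?_, fun m hm hmM hadm => ?_⟩
  · by_cases hs : s.card = k ∧ ↑s ⊆ M
    · filter_upwards [hMU, eventually_forall_lt hU s, b.eventually_norm_proj_sub_lt
        (hg s hs.1 hs.2) (R s) (by positivity : 0 < ε / 4)] with n h1 h2 h3 _ _ using ⟨h1, h2, h3⟩
    · exact Filter.univ_mem' fun n h1 h2 => (hs ⟨h1, h2⟩).elim
  obtain ⟨n, s, rfl, hns, hs⟩ := exists_eq_insert_forall_lt hm
  obtain ⟨hadm, -, hn⟩ := (admissible_insert_iff hns).1 hadm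
  have hsM : ↑s ⊆ M := (coe_subset.2 (subset_insert n s)).trans hmM
  obtain ⟨hnM, -, hhead⟩ := hn hs hsM
  obtain ⟨hv, hgv, hrR, hvR⟩ := hVR s hs hsM (hadm.mono fun _ => Set.inter_subset_left)
  have := hb.approxByBlocks_succ hv hrR hvR hgv
    (hf.norm_sub_weak_limit_insert_le hU hMU (hg s hs hsM) hs hsM hnM hns) hhead
  rwa [show ε / 2 + 2 * (ε / 4) = ε by ring] at this

theorem hasAdmissibleBlockApprox
    (hrefl : Function.Surjective (NormedSpace.inclusionInDoubleDual ℝ Y)) (hb : b.IsBimonotone)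
    (hU : (U : Filter ℕ) ≤ atTop) (hMU : M ∈ U) (r : ℕ) :
    ∀ (k : ℕ) {f : Finset ℕ → Y} {ε : ℝ}, LipschitzOnCard k M f L → 0 < ε →
      HasAdmissibleBlockApprox b r U M k f L ε
  | 0, f, _, _, hε => ⟨f ∅, fun _ => Set.univ, fun _ => Filter.univ_mem, fun m hm _ _ => by
      rw [card_eq_zero.1 hm]
      exact approxByBlocks_zero _ _ _ hε _⟩
  | k + 1, _, _, hf, hε => hasAdmissibleBlockApprox_succ hrefl hb hU hMU
      (hasAdmissibleBlockApprox hrefl hb hU hMU r k) hf hε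

end Induction

theorem lipschitz_map_approximate_block_decomposition_general
    {Y : Type*} [NormedAddCommGroup Y] [NormedSpace ℝ Y]
    (hrefl : Function.Surjective (NormedSpace.inclusionInDoubleDual ℝ Y))
    (e : ℕ → Y) (coef : Y → ℕ → ℝ)
    (hexp : ∀ v : Y, Filter.Tendsto (fun N => ∑ i ∈ Finset.range N, coef v i • e i)
      Filter.atTop (nhds v))
    (huniq : ∀ (a : ℕ → ℝ) (v : Y),
      Filter.Tendsto (fun N => ∑ i ∈ Finset.range N, a i • e i) Filter.atTop (nhds v) →
        a = coef v)
    (hbimono : ∀ (v : Y) (p q : ℕ), ‖∑ i ∈ Finset.Ico p q, coef v i • e i‖ ≤ ‖v‖)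
    (k r : ℕ) (ε : ℝ) (hε : 0 < ε) (M : Set ℕ) (hM : M.Infinite)
    (f : Finset ℕ → Y) (L : ℝ)
    (hL : ∀ m n : Finset ℕ, m.card = k → n.card = k → ↑m ⊆ M → ↑n ⊆ M →
      ‖f m - f n‖ ≤ L * dH m n) :
    ∃ (M' : Set ℕ) (y : Y), M' ⊆ M ∧ M'.Infinite ∧
      ∀ m : Finset ℕ, m.card = k → ↑m ⊆ M' →
        ∃ v : Fin k → (ℕ →₀ ℝ),
          (∀ i, ∀ a ∈ (v i).support, r ≤ a) ∧
          (∀ i j : Fin k, i < j → ∀ a ∈ (v i).support, ∀ b ∈ (v j).support, a < b) ∧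
          (∀ i, ‖(v i).sum fun j c => c • e j‖ ≤ L) ∧
          ‖f m - (y + ∑ i, (v i).sum fun j c => c • e j)‖ < ε := by
  obtain ⟨U, hMU, hU⟩ := hM.exists_ultrafilter_le_atTop
  obtain ⟨y, G, hGU, hG⟩ := hasAdmissibleBlockApprox hrefl
    (b := SchauderBasis.ofBimonotone hexp huniq hbimono) hbimono hU hMU r k hL hε
  obtain ⟨M', hM'M, hM', hM'G⟩ := exists_infinite_admissible hU hMU hGU
  refine ⟨M', y, hM'M, hM', fun m hm hmM' => ?_⟩
  obtain ⟨v, ⟨hvr, hvlt, hvL⟩, hv⟩ := hG m hm (hmM'.trans hM'M) (hM'G m hmM')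
  exact ⟨v, hvr, hvlt, hvL, hv⟩

/-- Let `Y` be a reflexive Banach space with a bimonotone Schauder basis `(e_i)` (with
coordinate functionals `coef`). For all `k, r ∈ ℕ`, `ε > 0`, every infinite `M ⊆ ℕ`
and every `L`-Lipschitz map `f : ([M]^k, d_H) → Y`, there exist an infinite `M' ⊆ M`
and `y ∈ Y` such that for every `m̄ ∈ [M']^k` there are finitely supported vectors
`y^{(1)}_{m̄} ≺ ⋯ ≺ y^{(k)}_{m̄}` (given by coefficient sequences `v i`) supported
beyond `r`, of norm at most `L`, with `‖f(m̄) − (y + y^{(1)}_{m̄} + ⋯ + y^{(k)}_{m̄})‖ < ε`. -/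
theorem lipschitz_map_approximate_block_decomposition
    {Y : Type*} [NormedAddCommGroup Y] [NormedSpace ℝ Y] [CompleteSpace Y]
    (hrefl : Function.Surjective (NormedSpace.inclusionInDoubleDual ℝ Y))
    (e : ℕ → Y) (coef : Y → ℕ → ℝ)
    (hexp : ∀ v : Y, Filter.Tendsto (fun N => ∑ i ∈ Finset.range N, coef v i • e i)
      Filter.atTop (nhds v))
    (huniq : ∀ (a : ℕ → ℝ) (v : Y),
      Filter.Tendsto (fun N => ∑ i ∈ Finset.range N, a i • e i) Filter.atTop (nhds v) →
        a = coef v)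
    (hbimono : ∀ (v : Y) (p q : ℕ), ‖∑ i ∈ Finset.Ico p q, coef v i • e i‖ ≤ ‖v‖)
    (k r : ℕ) (ε : ℝ) (hε : 0 < ε) (M : Set ℕ) (hM : M.Infinite)
    (f : Finset ℕ → Y) (L : ℝ)
    (hL : ∀ m n : Finset ℕ, m.card = k → n.card = k → ↑m ⊆ M → ↑n ⊆ M →
      ‖f m - f n‖ ≤ L * dH m n) :
    ∃ (M' : Set ℕ) (y : Y), M' ⊆ M ∧ M'.Infinite ∧
      ∀ m : Finset ℕ, m.card = k → ↑m ⊆ M' →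
        ∃ v : Fin k → (ℕ →₀ ℝ),
          (∀ i, ∀ a ∈ (v i).support, r ≤ a) ∧
          (∀ i j : Fin k, i < j → ∀ a ∈ (v i).support, ∀ b ∈ (v j).support, a < b) ∧
          (∀ i, ‖(v i).sum fun j c => c • e j‖ ≤ L) ∧
          ‖f m - (y + ∑ i, (v i).sum fun j c => c • e j)‖ < ε :=
  lipschitz_map_approximate_block_decomposition_general hrefl e coef hexp huniq hbimono k r ε hε M
    hM f L hL
end

section
/- Let Y be a Banach space with the property that for every k and every 1-Lipschitz map f : ([ℕ]^k, d_H) → Y there exists an infinite M ⊂ ℕ with ‖f(m̄) − f(n̄)‖ ≤ C for all m̄, n̄ ∈ [M]^k (C a fixed constant). Then the Hamming graphs (H_k^ω)_{k≥1} = ([ℕ]^k, d_H)_{k≥1} do not equi-coarsely embed into Y. -/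
open Finset Function

section StrictMono

variable {ι α : Type*} [LinearOrder ι] [LinearOrder α]

theorem StrictMono.update_of_lt_of_forall_lt_eq {a b : ι → α} (ha : StrictMono a)
    (hb : StrictMono b) {i : ι} (hlt : a i < b i) (heq : ∀ j, i < j → a j = b j) :
    StrictMono (update a i (b i)) := by
  intro j l hjl
  rcases eq_or_ne j i with rfl | hj
  · rw [update_self, update_of_ne hjl.ne', heq l hjl]
    exact hb hjl
  · rw [update_of_ne hj]
    rcases eq_or_ne l i with rfl | hl
    · rw [update_self]
      exact (ha hjl).trans hlt
    · rw [update_of_ne hl]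
      exact ha hjl

variable [Fintype ι]

theorem hammingDist_update_left (a : ι → α) {i : ι} {x : α} (hx : a i ≠ x) :
    hammingDist a (update a i x) = 1 := by
  rw [hammingDist, card_eq_one]
  refine ⟨i, ?_⟩
  ext j
  by_cases hj : j = i
  · simp [hj, hx]
  · simp [hj]

theorem hammingDist_update_right {a b : ι → α} {i : ι} (hi : a i ≠ b i) :
    hammingDist (update a i (b i)) b + 1 = hammingDist a b := by
  have : ({j | update a i (b i) j ≠ b j} : Finset ι) =
      ({j | a j ≠ b j} : Finset ι).erase i := by
    ext j
    by_cases hj : j = i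
    · simp [hj]
    · simp [hj]
  rw [hammingDist, hammingDist, this, card_erase_add_one (by simpa using hi)]

/-- At the last index where `a` and `b` differ, overwrite the smaller entry by the larger one. -/
theorem StrictMono.exists_hammingDist_eq_one {a b : ι → α} (ha : StrictMono a)
    (hb : StrictMono b) (hab : a ≠ b) :
    ∃ c, StrictMono c ∧ ((hammingDist a c = 1 ∧ hammingDist c b + 1 = hammingDist a b) ∨
      (hammingDist a c + 1 = hammingDist a b ∧ hammingDist c b = 1)) := by
  have hne : ({j | a j ≠ b j} : Finset ι).Nonempty := by
    simpa [Finset.filter_nonempty_iff, funext_iff] using hab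
  set i := ({j | a j ≠ b j} : Finset ι).max' hne
  have hi : a i ≠ b i := by simpa using max'_mem _ hne
  have heq : ∀ j, i < j → a j = b j := fun j hij => by
    by_contra h
    exact (le_max' _ j (by simpa using h)).not_gt hij
  rcases hi.lt_or_gt with hlt | hgt
  · exact ⟨_, ha.update_of_lt_of_forall_lt_eq hb hlt heq,
      .inl ⟨hammingDist_update_left a hi, hammingDist_update_right hi⟩⟩
  · refine ⟨_, hb.update_of_lt_of_forall_lt_eq ha hgt fun j hij => (heq j hij).symm,
      .inr ⟨?_, ?_⟩⟩
    · rw [hammingDist_comm a, hammingDist_comm a, hammingDist_update_right hi.symm]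
    · rw [hammingDist_comm, hammingDist_update_left b hi.symm]

theorem norm_sub_le_mul_hammingDist {Y : Type*} [SeminormedAddCommGroup Y] {g : (ι → α) → Y}
    {L : ℝ}
    (hg : ∀ a b, StrictMono a → StrictMono b → hammingDist a b = 1 → ‖g a - g b‖ ≤ L)
    {a b : ι → α} (ha : StrictMono a) (hb : StrictMono b) :
    ‖g a - g b‖ ≤ L * hammingDist a b := by
  induction hd : hammingDist a b generalizing a b with
  | zero => simp [hammingDist_eq_zero.mp hd]
  | succ d ih =>
    obtain ⟨c, hc, ⟨hac, hcb⟩ | ⟨hac, hcb⟩⟩ :=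
      ha.exists_hammingDist_eq_one hb (hammingDist_ne_zero.mp (by omega))
    · calc ‖g a - g b‖ ≤ ‖g a - g c‖ + ‖g c - g b‖ :=
            norm_sub_le_norm_sub_add_norm_sub _ _ _
        _ ≤ L + L * d := add_le_add (hg a c ha hc hac) (ih hc hb (by omega))
        _ = L * (d + 1 : ℕ) := by push_cast; ring
    · calc ‖g a - g b‖ ≤ ‖g a - g c‖ + ‖g c - g b‖ :=
            norm_sub_le_norm_sub_add_norm_sub _ _ _
        _ ≤ L * d + L := add_le_add (ih ha hc (by omega)) (hg c b hc hb hcb)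
        _ = L * (d + 1 : ℕ) := by push_cast; ring

end StrictMono

theorem List.countP_finRange_eq_card_filter {k : ℕ} (p : Fin k → Bool) :
    (List.finRange k).countP p = #{i | p i} := by
  simp [List.countP_eq_length_filter, Finset.filter, Finset.card, Fin.univ_def]

theorem dH_eq_hammingDist {k : ℕ} {m n : Finset ℕ} (hm : m.card = k) (hn : n.card = k) :
    dH m n = hammingDist (m.orderEmbOfFin hm) (n.orderEmbOfFin hn) := by
  rw [dH, ← m.listMap_orderEmbOfFin_finRange hm, ← n.listMap_orderEmbOfFin_finRange hn,
    List.zip_map', List.countP_map, List.countP_finRange_eq_card_filter, hm, hn, max_self,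
    min_self, Nat.sub_self, add_zero]
  simp [hammingDist]

theorem dH_image_eq_hammingDist {k : ℕ} {a b : Fin k → ℕ} (ha : StrictMono a)
    (hb : StrictMono b) :
    dH (univ.image a) (univ.image b) = hammingDist a b := by
  have hcard : ∀ {c : Fin k → ℕ}, StrictMono c → (univ.image c).card = k := fun hc => by
    simp [card_image_of_injective _ hc.injective]
  rw [dH_eq_hammingDist (hcard ha) (hcard hb),
    ← orderEmbOfFin_unique (hcard ha) (fun _ => mem_image_of_mem _ (mem_univ _)) ha,
    ← orderEmbOfFin_unique (hcard hb) (fun _ => mem_image_of_mem _ (mem_univ _)) hb]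

theorem norm_sub_le_mul_dH {Y : Type*} [SeminormedAddCommGroup Y] {k : ℕ} {f : Finset ℕ → Y}
    {L : ℝ}
    (hf : ∀ m n : Finset ℕ, m.card = k → n.card = k → dH m n = 1 → ‖f m - f n‖ ≤ L)
    {m n : Finset ℕ} (hm : m.card = k) (hn : n.card = k) :
    ‖f m - f n‖ ≤ L * dH m n := by
  have hg : ∀ a b : Fin k → ℕ, StrictMono a → StrictMono b → hammingDist a b = 1 →
      ‖f (univ.image a) - f (univ.image b)‖ ≤ L := fun a b ha hb hab =>
    hf _ _ (by simp [card_image_of_injective _ ha.injective])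
      (by simp [card_image_of_injective _ hb.injective])
      (by rw [dH_image_eq_hammingDist ha hb, hab])
  have := norm_sub_le_mul_hammingDist hg (m.orderEmbOfFin hm).strictMono
    (n.orderEmbOfFin hn).strictMono
  rwa [image_orderEmbOfFin_univ, image_orderEmbOfFin_univ, ← dH_eq_hammingDist] at this

theorem dH_eq_of_disjoint {k : ℕ} {m n : Finset ℕ} (hm : m.card = k) (hn : n.card = k)
    (hmn : Disjoint m n) : dH m n = k := by
  rw [dH_eq_hammingDist hm hn, hammingDist, filter_true_of_mem, card_univ, Fintype.card_fin]
  exact fun i _ h =>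
    disjoint_left.mp hmn (orderEmbOfFin_mem m hm i) (h ▸ orderEmbOfFin_mem n hn i)

theorem Set.Infinite.exists_dH_eq {M : Set ℕ} (hM : M.Infinite) (k : ℕ) :
    ∃ m n : Finset ℕ, m.card = k ∧ n.card = k ∧ ↑m ⊆ M ∧ ↑n ⊆ M ∧ dH m n = k := by
  obtain ⟨m, hmM, hm⟩ := hM.exists_subset_card_eq k
  obtain ⟨n, hnM, hn⟩ := (hM.sdiff m.finite_toSet).exists_subset_card_eq k
  refine ⟨m, n, hm, hn, hmM, hnM.trans Set.sdiff_subset, dH_eq_of_disjoint hm hn ?_⟩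
  exact Finset.disjoint_left.mpr fun x hxm hxn => (hnM hxn).2 hxm

/-- If `Y` has the property that every `1`-Lipschitz map `f : ([ℕ]^k, d_H) → Y`
concentrates on `[M]^k` for some infinite `M` (oscillation at most a fixed constant
`C`), then the Hamming graphs `(H_k^ω)_{k ≥ 1}` do not equi-coarsely embed into `Y`. -/
theorem concentration_implies_no_equi_coarse_hamming
    {Y : Type*} [NormedAddCommGroup Y] [NormedSpace ℝ Y] (C : ℝ)
    (hC : ∀ (k : ℕ) (f : Finset ℕ → Y),
      (∀ m n : Finset ℕ, m.card = k → n.card = k → ‖f m - f n‖ ≤ dH m n) →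
      ∃ M : Set ℕ, M.Infinite ∧
        ∀ m n : Finset ℕ, m.card = k → n.card = k → ↑m ⊆ M → ↑n ⊆ M →
          ‖f m - f n‖ ≤ C) :
    ¬ ∃ (ρ ω : ℝ → ℝ) (f : ℕ → Finset ℕ → Y),
        Monotone ρ ∧ Monotone ω ∧ Filter.Tendsto ρ Filter.atTop Filter.atTop ∧
        ∀ (k : ℕ) (m n : Finset ℕ), m.card = k → n.card = k →
          ρ (dH m n) ≤ ‖f k m - f k n‖ ∧ ‖f k m - f k n‖ ≤ ω (dH m n) := by
  rintro ⟨ρ, ω, f, -, -, hρ, hf⟩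
  set c := max (ω 1) 1
  have hc : 0 < c := lt_max_of_lt_right one_pos
  obtain ⟨k, hk⟩ :=
    ((hρ.comp tendsto_natCast_atTop_atTop).eventually_gt_atTop (c * C)).exists
  have hscale (m n : Finset ℕ) : ‖c⁻¹ • f k m - c⁻¹ • f k n‖ = c⁻¹ * ‖f k m - f k n‖ := by
    rw [← smul_sub, norm_smul_of_nonneg (inv_nonneg.mpr hc.le)]
  have hstep :
      ∀ m n : Finset ℕ, m.card = k → n.card = k → dH m n = 1 → ‖f k m - f k n‖ ≤ c :=
    fun m n hm hn h1 => by
      simpa only [h1, Nat.cast_one] using (hf k m n hm hn).2.trans (le_max_left _ 1)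
  obtain ⟨M, hM, hconc⟩ := hC k (fun s => c⁻¹ • f k s) fun m n hm hn => by
    rw [hscale, inv_mul_le_iff₀ hc]
    exact norm_sub_le_mul_dH hstep hm hn
  obtain ⟨m, n, hm, hn, hmM, hnM, hmn⟩ := hM.exists_dH_eq k
  have hfar := (hf k m n hm hn).1
  have hnear := hconc m n hm hn hmM hnM
  rw [hmn] at hfar
  rw [hscale, inv_mul_le_iff₀ hc] at hnear
  exact (hk.trans_le hfar).not_ge hnear
end

section
/- Let X be a Banach space containing a sequence (x_n) in the unit ball such that for all k and all n_1 < ... < n_{2k}, ‖Σ_{i=1}^k x_{n_i} − Σ_{i=k+1}^{2k} x_{n_i}‖ ≥ k/2. Then the maps φ_k : ([ℕ]^k, d_H) → X, φ_k(n̄) = Σ_{i=1}^k x_{n_i}, are 2-Lipschitz, and for m̄, n̄ ∈ [M]^k with max(m̄) < min(n̄) one has ‖φ_k(m̄) − φ_k(n̄)‖ ≥ k/2. -/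
theorem List.sum_map_sub_sum_map_eq_sum_map_zip {α M : Type*} [AddCommGroup M] (f : α → M)
    {l₁ l₂ : List α} (h : l₁.length = l₂.length) :
    (l₁.map f).sum - (l₂.map f).sum = ((l₁.zip l₂).map fun p => f p.1 - f p.2).sum := by
  obtain ⟨l, rfl, rfl⟩ : ∃ l : List (α × α), l.map Prod.fst = l₁ ∧ l.map Prod.snd = l₂ :=
    ⟨_, List.map_fst_zip h.le, List.map_snd_zip h.ge⟩
  clear h
  induction l with
  | nil => simp
  | cons p l ih => simp only [List.map_cons, List.zip_cons_cons, List.sum_cons, ← ih]; abel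

theorem List.norm_sum_map_sub_le_two_mul_countP {α E : Type*} [BEq α] [LawfulBEq α]
    [SeminormedAddCommGroup E] {f : α → E} (hf : ∀ a, ‖f a‖ ≤ 1) (l : List (α × α)) :
    ‖(l.map fun p => f p.1 - f p.2).sum‖ ≤ 2 * l.countP (fun p => p.1 != p.2) := by
  induction l with
  | nil => simp
  | cons p l ih =>
    have hp : ‖f p.1 - f p.2‖ ≤ 2 * (if p.1 != p.2 then 1 else 0 : ℕ) := by
      by_cases h : p.1 = p.2
      · simp [h]
      · simpa [h, one_add_one_eq_two] using (norm_sub_le _ _).trans (add_le_add (hf p.1) (hf p.2))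
    calc ‖(f p.1 - f p.2) + (l.map fun p => f p.1 - f p.2).sum‖
        ≤ ‖f p.1 - f p.2‖ + ‖(l.map fun p => f p.1 - f p.2).sum‖ := norm_add_le _ _
      _ ≤ 2 * (if p.1 != p.2 then 1 else 0 : ℕ) + 2 * l.countP (fun p => p.1 != p.2) :=
        add_le_add hp ih
      _ = 2 * (p :: l).countP (fun p => p.1 != p.2) := by
        rw [List.countP_cons]; push_cast; ring

theorem Finset.sum_eq_sum_map_sort {α M : Type*} [LinearOrder α] [AddCommMonoid M] (s : Finset α)
    (f : α → M) :
    ∑ i ∈ s, f i = ((s.sort (· ≤ ·)).map f).sum := by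
  rw [Finset.sum, ← Finset.sort_eq s (· ≤ ·), Multiset.map_coe, Multiset.sum_coe]

theorem Finset.sum_orderEmbOfFin {α M : Type*} [LinearOrder α] [AddCommMonoid M] {s : Finset α}
    {k : ℕ} (h : s.card = k) (f : α → M) : ∑ i, f (s.orderEmbOfFin h i) = ∑ j ∈ s, f j := by
  conv_rhs => rw [← Finset.map_orderEmbOfFin_univ s h, Finset.sum_map]
  rfl

theorem Fin.strictMono_append {α : Type*} [Preorder α] {a b : ℕ} {u : Fin a → α} {v : Fin b → α}
    (hu : StrictMono u) (hv : StrictMono v) (huv : ∀ i j, u i < v j) :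
    StrictMono (Fin.append u v) := by
  intro i j hij
  induction i using Fin.addCases <;> induction j using Fin.addCases
  all_goals simp only [Fin.append_left, Fin.append_right]
  · exact hu hij
  · exact huv _ _
  · exact absurd hij (by simp only [Fin.lt_def, Fin.val_natAdd, Fin.val_castAdd]; omega)
  · exact hv (Nat.lt_of_add_lt_add_left hij)

theorem Fin.sum_ite_lt_eq_sum_castAdd {M : Type*} [AddCommMonoid M] {a b : ℕ} (f : Fin (a + b) → M) :
    (∑ i : Fin (a + b), if (i : ℕ) < a then f i else 0) = ∑ i : Fin a, f (Fin.castAdd b i) := by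
  simp [Fin.sum_univ_add]

theorem Fin.sum_ite_lt_zero_eq_sum_natAdd {M : Type*} [AddCommMonoid M] {a b : ℕ} (f : Fin (a + b) → M) :
    (∑ i : Fin (a + b), if (i : ℕ) < a then 0 else f i) = ∑ i : Fin b, f (Fin.natAdd a i) := by
  simp [Fin.sum_univ_add]

theorem dH_of_card_eq {m n : Finset ℕ} (h : m.card = n.card) :
    dH m n = ((m.sort (· ≤ ·)).zip (n.sort (· ≤ ·))).countP (fun p => p.1 != p.2) := by
  simp [dH, h]

theorem norm_sum_sub_sum_le_two_mul_dH {E : Type*} [SeminormedAddCommGroup E] {x : ℕ → E}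
    (hx : ∀ n, ‖x n‖ ≤ 1) {m n : Finset ℕ} (h : m.card = n.card) :
    ‖(∑ j ∈ m, x j) - ∑ j ∈ n, x j‖ ≤ 2 * dH m n := by
  rw [dH_of_card_eq h, Finset.sum_eq_sum_map_sort, Finset.sum_eq_sum_map_sort,
    List.sum_map_sub_sum_map_eq_sum_map_zip _ (by simp [h])]
  exact List.norm_sum_map_sub_le_two_mul_countP hx _

theorem james_sequence_hamming_maps_general
    {X : Type*} [NormedAddCommGroup X]
    (x : ℕ → X) (hx : ∀ n, ‖x n‖ ≤ 1)
    (hJ : ∀ (k : ℕ) (n : Fin (2 * k) → ℕ), StrictMono n →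
      (k : ℝ) / 2 ≤ ‖(∑ i : Fin (2 * k), if (i : ℕ) < k then x (n i) else 0) -
        ∑ i : Fin (2 * k), if (i : ℕ) < k then 0 else x (n i)‖) :
    (∀ (k : ℕ) (m n : Finset ℕ), m.card = k → n.card = k →
      ‖(∑ j ∈ m, x j) - ∑ j ∈ n, x j‖ ≤ 2 * dH m n) ∧
    (∀ (k : ℕ) (m n : Finset ℕ), m.card = k → n.card = k →
      (∀ a ∈ m, ∀ b ∈ n, a < b) →
      (k : ℝ) / 2 ≤ ‖(∑ j ∈ m, x j) - ∑ j ∈ n, x j‖) := by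
  refine ⟨fun k m n hm hn => norm_sum_sub_sum_le_two_mul_dH hx (hm.trans hn.symm), ?_⟩
  intro k m n hm hn hmn
  have hmono : StrictMono (Fin.append (m.orderEmbOfFin hm) (n.orderEmbOfFin hn)) :=
    Fin.strictMono_append (m.orderEmbOfFin hm).strictMono (n.orderEmbOfFin hn).strictMono
      fun i j => hmn _ (m.orderEmbOfFin_mem hm i) _ (n.orderEmbOfFin_mem hn j)
  have hJk := hJ k
  rw [two_mul] at hJk
  simpa only [Fin.sum_ite_lt_eq_sum_castAdd, Fin.sum_ite_lt_zero_eq_sum_natAdd, Fin.append_left, Fin.append_right,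
    Finset.sum_orderEmbOfFin] using hJk _ hmono

/-- If `(x_n)` is a sequence in the unit ball of `X` with
`‖∑_{i=1}^k x_{n_i} − ∑_{i=k+1}^{2k} x_{n_i}‖ ≥ k/2` for all `n_1 < ⋯ < n_{2k}`, then
the maps `φ_k : ([ℕ]^k, d_H) → X`, `φ_k(n̄) = ∑ x_{n_i}`, are `2`-Lipschitz and for
`m̄, n̄ ∈ [ℕ]^k` with `max m̄ < min n̄` one has `‖φ_k(m̄) − φ_k(n̄)‖ ≥ k/2`. -/
theorem james_sequence_hamming_maps
    {X : Type*} [NormedAddCommGroup X] [NormedSpace ℝ X]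
    (x : ℕ → X) (hx : ∀ n, ‖x n‖ ≤ 1)
    (hJ : ∀ (k : ℕ) (n : Fin (2 * k) → ℕ), StrictMono n →
      (k : ℝ) / 2 ≤ ‖(∑ i : Fin (2 * k), if (i : ℕ) < k then x (n i) else 0) -
        ∑ i : Fin (2 * k), if (i : ℕ) < k then 0 else x (n i)‖) :
    (∀ (k : ℕ) (m n : Finset ℕ), m.card = k → n.card = k →
      ‖(∑ j ∈ m, x j) - ∑ j ∈ n, x j‖ ≤ 2 * dH m n) ∧
    (∀ (k : ℕ) (m n : Finset ℕ), m.card = k → n.card = k →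
      (∀ a ∈ m, ∀ b ∈ n, a < b) →
      (k : ℝ) / 2 ≤ ‖(∑ j ∈ m, x j) - ∑ j ∈ n, x j‖) :=
  james_sequence_hamming_maps_general x hx hJ
end
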